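/- Theorem (logical consistency): there is no term t such that • ⊢ t : ⊥ is derivable in the empty context, where ⊥ = ∀X₀ X₀. -/

import Mathlib

namespace CBV

/-! ## Syntax: values, terms, stacks, processes of the call-by-value λμ-calculus.
    λ-variables, μ-variables, term variables, labels and constructors are all
    represented by natural numbers. -/

mutual
  /-- Values: `x`, `λx.t`, `C[v]`, `{lᵢ = vᵢ}`. -/
  inductive Val : Type where
    | var : ℕ → Val                      -- λ-variable x
    | lam : ℕ → Trm → Val                -- λx.t
    | cns : ℕ → Val → Val                -- C[v]
    | rcd : Flds → Val                   -- {lᵢ = vᵢ}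
  /-- Record fields: a finite list of (label, value) pairs. -/
  inductive Flds : Type where
    | nil : Flds
    | cons : ℕ → Val → Flds → Flds
  /-- Terms: `a`, `v`, `t u`, `μα.t`, `p`, `v.l`, `case_v [Cᵢ[xᵢ] → tᵢ]`, `δ_{v,w}`. -/
  inductive Trm : Type where
    | tvar : ℕ → Trm                     -- term variable a
    | val : Val → Trm
    | app : Trm → Trm → Trm
    | mu : ℕ → Trm → Trm                 -- μα.t
    | prc : Proc → Trm
    | prj : Val → ℕ → Trm                -- v.l
    | cse : Val → Brs → Trm              -- case_v [...]
    | dlt : Val → Val → Trm              -- δ_{v,w}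
  /-- Case branches: a finite list of (constructor, bound λ-variable, body). -/
  inductive Brs : Type where
    | nil : Brs
    | cons : ℕ → ℕ → Trm → Brs → Brs
  /-- Stacks: `α`, `v.π`, `[t]π`. -/
  inductive Stk : Type where
    | svar : ℕ → Stk                     -- stack (μ-)variable α
    | push : Val → Stk → Stk             -- v.π
    | frame : Trm → Stk → Stk            -- [t]π
  /-- Processes: `t ∗ π`. -/
  inductive Proc : Type where
    | mk : Trm → Stk → Proc
end

/-- Lookup of a label in a record. -/
def Flds.lookup : Flds → ℕ → Option Val
  | .nil, _ => none
  | .cons l v fs, k => if l = k then some v else fs.lookup k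

/-- Lookup of a constructor among case branches, returning the bound variable and body. -/
def Brs.lookup : Brs → ℕ → Option (ℕ × Trm)
  | .nil, _ => none
  | .cons c x t bs, k => if c = k then some (x, t) else bs.lookup k

/-- A substitution maps λ-variables to values, μ-variables to stacks and
    term variables to terms (totally; the identity outside its support). -/
structure Subst : Type where
  lamS : ℕ → Val
  muS  : ℕ → Stk
  trmS : ℕ → Trm

/-- The identity substitution. -/
def Subst.id : Subst := ⟨Val.var, Stk.svar, Trm.tvar⟩

/-- The substitution [x := v] of a single λ-variable. -/
def subst1Lam (x : ℕ) (v : Val) : Subst :=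
  { Subst.id with lamS := Function.update Val.var x v }

/-- The substitution [α := π] of a single μ-variable. -/
def subst1Mu (α : ℕ) (π : Stk) : Subst :=
  { Subst.id with muS := Function.update Stk.svar α π }

/-- The substitution [a := t] of a single term variable. -/
def subst1Trm (a : ℕ) (t : Trm) : Subst :=
  { Subst.id with trmS := Function.update Trm.tvar a t }

/-- Remove a λ-variable from the support of a substitution (used under binders). -/
def Subst.skipLam (σ : Subst) (x : ℕ) : Subst :=
  { σ with lamS := Function.update σ.lamS x (Val.var x) }

/-- Remove a μ-variable from the support of a substitution (used under binders). -/
def Subst.skipMu (σ : Subst) (α : ℕ) : Subst :=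
  { σ with muS := Function.update σ.muS α (Stk.svar α) }

mutual
  /-- Application of a substitution to a value. -/
  def substVal (σ : Subst) : Val → Val
    | .var x => σ.lamS x
    | .lam x t => .lam x (substTrm (σ.skipLam x) t)
    | .cns c v => .cns c (substVal σ v)
    | .rcd fs => .rcd (substFlds σ fs)
  /-- Application of a substitution to record fields. -/
  def substFlds (σ : Subst) : Flds → Flds
    | .nil => .nil
    | .cons l v fs => .cons l (substVal σ v) (substFlds σ fs)
  /-- Application of a substitution to a term. -/
  def substTrm (σ : Subst) : Trm → Trm
    | .tvar a => σ.trmS a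
    | .val v => .val (substVal σ v)
    | .app t u => .app (substTrm σ t) (substTrm σ u)
    | .mu α t => .mu α (substTrm (σ.skipMu α) t)
    | .prc p => .prc (substPrc σ p)
    | .prj v l => .prj (substVal σ v) l
    | .cse v bs => .cse (substVal σ v) (substBrs σ bs)
    | .dlt v w => .dlt (substVal σ v) (substVal σ w)
  /-- Application of a substitution to case branches. -/
  def substBrs (σ : Subst) : Brs → Brs
    | .nil => .nil
    | .cons c x t bs => .cons c x (substTrm (σ.skipLam x) t) (substBrs σ bs)
  /-- Application of a substitution to a stack. -/
  def substStk (σ : Subst) : Stk → Stk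
    | .svar α => σ.muS α
    | .push v π => .push (substVal σ v) (substStk σ π)
    | .frame t π => .frame (substTrm σ t) (substStk σ π)
  /-- Application of a substitution to a process. -/
  def substPrc (σ : Subst) : Proc → Proc
    | .mk t π => .mk (substTrm σ t) (substStk σ π)
end

/-! ## The reduction relation (≻). -/

/-- The reduction relation (≻) of the Krivine abstract machine. -/
inductive Red : Proc → Proc → Prop where
  | app (t u : Trm) (π : Stk) :
      Red (.mk (.app t u) π) (.mk u (.frame t π))
  | frame (v : Val) (t : Trm) (π : Stk) :
      Red (.mk (.val v) (.frame t π)) (.mk t (.push v π))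
  | beta (x : ℕ) (t : Trm) (v : Val) (π : Stk) :
      Red (.mk (.val (.lam x t)) (.push v π)) (.mk (substTrm (subst1Lam x v) t) π)
  | mu (α : ℕ) (t : Trm) (π : Stk) :
      Red (.mk (.mu α t) π) (.mk (substTrm (subst1Mu α π) t) π)
  | prc (p : Proc) (π : Stk) :
      Red (.mk (.prc p) π) p
  | prj (fs : Flds) (l : ℕ) (v : Val) (π : Stk) :
      fs.lookup l = some v →
      Red (.mk (.prj (.rcd fs) l) π) (.mk (.val v) π)
  | cse (c : ℕ) (v : Val) (bs : Brs) (x : ℕ) (t : Trm) (π : Stk) :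
      bs.lookup c = some (x, t) →
      Red (.mk (.cse (.cns c v) bs) π) (.mk (substTrm (subst1Lam x v) t) π)

/-- k-fold application of a relation. -/
def iterRel (R : Proc → Proc → Prop) : ℕ → Proc → Proc → Prop
  | 0 => Eq
  | k + 1 => fun p r => ∃ q, R p q ∧ iterRel R k q r

/-- A process is final if it is of the form `v ∗ α`. -/
def Final (p : Proc) : Prop :=
  ∃ (v : Val) (α : ℕ), p = .mk (.val v) (.svar α)

/-- A process is δ-like if it is of the form `δ_{v,w} ∗ π`. -/
def DeltaLike (p : Proc) : Prop :=
  ∃ (v w : Val) (π : Stk), p = .mk (.dlt v w) π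

/-- A process is blocked if it has no (≻)-reduct. -/
def Blocked (p : Proc) : Prop := ¬ ∃ q, Red p q

/-- A process is stuck if it is neither final nor δ-like, and all its
    substitution instances are blocked. -/
def Stuck (p : Proc) : Prop :=
  ¬ Final p ∧ ¬ DeltaLike p ∧ ∀ σ : Subst, Blocked (substPrc σ p)

/-- A process is non-terminating if it reaches no blocked process. -/
def NonTerminating (p : Proc) : Prop :=
  ¬ ∃ q, Relation.ReflTransGen Red p q ∧ Blocked q

/-- `p ⇓_R`: the process `p` converges for the reduction relation `R`,
    i.e. it `R`-reduces to a final process. -/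
def ConvergesIn (R : Proc → Proc → Prop) (p : Proc) : Prop :=
  ∃ q, Relation.ReflTransGen R p q ∧ Final q

/-- The indexed reduction relation (↪ᵢ) = (≻) ∪ {(δ_{v,w} ∗ π, v ∗ π) | ∃ j < i, v ≢ⱼ w}.
    (The condition `v ≢ⱼ w` is inlined; it coincides with `¬ EquivI j v w` below.) -/
def RedI : ℕ → Proc → Proc → Prop
  | i => fun p q =>
      Red p q ∨
      ∃ (v w : Val) (π : Stk), p = .mk (.dlt v w) π ∧ q = .mk (.val v) π ∧
        ∃ j, ∃ _ : j < i,
          ¬ (∀ k, ∀ _ : k ≤ j, ∀ (π' : Stk) (σ : Subst),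
              ConvergesIn (RedI k) (.mk (substTrm σ (.val v)) π') ↔
              ConvergesIn (RedI k) (.mk (substTrm σ (.val w)) π'))
  termination_by i => i
  decreasing_by omega

/-- The indexed observational equivalence (≡ᵢ). -/
def EquivI (i : ℕ) (t u : Trm) : Prop :=
  ∀ j, j ≤ i → ∀ (π : Stk) (σ : Subst),
    ConvergesIn (RedI j) (.mk (substTrm σ t) π) ↔
    ConvergesIn (RedI j) (.mk (substTrm σ u) π)

/-- The reduction relation (↪) = ∪ᵢ (↪ᵢ). -/
def RedFull (p q : Proc) : Prop := ∃ i, RedI i p q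

/-- Observational equivalence (≡) = ∩ᵢ (≡ᵢ). -/
def Equiv (t u : Trm) : Prop := ∀ i, EquivI i t u

/-! ## The pole and orthogonality. -/

/-- The pole ⫫ = {p | p ⇓_↪}. -/
def Pole : Set Proc := {p | ConvergesIn RedFull p}

/-- Orthogonal of a set of values: φ^⊥ = {π | ∀ v ∈ φ, v ∗ π ∈ ⫫}. -/
def orth (φ : Set Val) : Set Stk :=
  {π | ∀ v ∈ φ, Proc.mk (.val v) π ∈ Pole}

/-- Bi-orthogonal of a set of values: φ^⊥⊥ = {t | ∀ π ∈ φ^⊥, t ∗ π ∈ ⫫}. -/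
def biorth (φ : Set Val) : Set Trm :=
  {t | ∀ π ∈ orth φ, Proc.mk t π ∈ Pole}

/-! ## Free variables and closedness. -/

/-- The kinds of variables: λ-variables, μ-variables, term variables,
    predicate variables. -/
inductive VKind : Type where
  | lam | mu | trm | prd
deriving DecidableEq

mutual
  /-- Free variables (of every kind) of a value. -/
  def fvVal : Val → Set (VKind × ℕ)
    | .var x => {(VKind.lam, x)}
    | .lam x t => fvTrm t \ {(VKind.lam, x)}
    | .cns _ v => fvVal v
    | .rcd fs => fvFlds fs
  /-- Free variables of record fields. -/
  def fvFlds : Flds → Set (VKind × ℕ)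
    | .nil => ∅
    | .cons _ v fs => fvVal v ∪ fvFlds fs
  /-- Free variables of a term. -/
  def fvTrm : Trm → Set (VKind × ℕ)
    | .tvar a => {(VKind.trm, a)}
    | .val v => fvVal v
    | .app t u => fvTrm t ∪ fvTrm u
    | .mu α t => fvTrm t \ {(VKind.mu, α)}
    | .prc p => fvPrc p
    | .prj v _ => fvVal v
    | .cse v bs => fvVal v ∪ fvBrs bs
    | .dlt v w => fvVal v ∪ fvVal w
  /-- Free variables of case branches. -/
  def fvBrs : Brs → Set (VKind × ℕ)
    | .nil => ∅
    | .cons _ x t bs => (fvTrm t \ {(VKind.lam, x)}) ∪ fvBrs bs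
  /-- Free variables of a stack. -/
  def fvStk : Stk → Set (VKind × ℕ)
    | .svar α => {(VKind.mu, α)}
    | .push v π => fvVal v ∪ fvStk π
    | .frame t π => fvTrm t ∪ fvStk π
  /-- Free variables of a process. -/
  def fvPrc : Proc → Set (VKind × ℕ)
    | .mk t π => fvTrm t ∪ fvStk π
end

/-- A term is closed if it contains no free variable of any kind. -/
def ClosedTrm (t : Trm) : Prop := fvTrm t = ∅

end CBV
namespace CBV

/-! ## Second-order formulas.

Predicate variables are interpreted by (semantic) predicates mapping lists of
terms to sets of values; the constructor `papp` allows a formula to contain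
such a semantic predicate directly (formulas with parameters), which is used
to state the second-order elimination/introduction rules. -/

mutual
  /-- Formulas of the second-order type system. -/
  inductive Form : Type where
    | pvar : ℕ → List Trm → Form                     -- X(t₁,…,tₙ)
    | papp : (List Trm → Set Val) → List Trm → Form  -- P(t₁,…,tₙ), P a semantic predicate
    | arr  : Form → Form → Form                      -- A ⇒ B
    | all1 : ℕ → Form → Form                         -- ∀a A
    | ex1  : ℕ → Form → Form                         -- ∃a A
    | all2 : ℕ → Form → Form                         -- ∀X A
    | ex2  : ℕ → Form → Form                         -- ∃X A
    | rcd  : FFlds → Form                            -- {lᵢ : Aᵢ}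
    | vnt  : FFlds → Form                            -- [Cᵢ : Aᵢ]
    | mem  : Trm → Form → Form                       -- t ∈ A
    | rest : Form → Trm → Trm → Form                 -- A ↾ t ≡ u
  /-- Lists of (label/constructor, formula) pairs. -/
  inductive FFlds : Type where
    | nil : FFlds
    | cons : ℕ → Form → FFlds → FFlds
end

/-- Lookup in a list of (label, formula) pairs. -/
def FFlds.lookup : FFlds → ℕ → Option Form
  | .nil, _ => none
  | .cons l A Fs, k => if l = k then some A else Fs.lookup k

/-- Convert to an ordinary list. -/
def FFlds.toList : FFlds → List (ℕ × Form)
  | .nil => []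
  | .cons l A Fs => (l, A) :: Fs.toList

/-- Remove a term variable from the support of a substitution. -/
def Subst.skipTrm (σ : Subst) (a : ℕ) : Subst :=
  { σ with trmS := Function.update σ.trmS a (Trm.tvar a) }

mutual
  /-- Application of a (term-level) substitution to a formula. -/
  def substForm (σ : Subst) : Form → Form
    | .pvar X ts => .pvar X (ts.map (substTrm σ))
    | .papp P ts => .papp P (ts.map (substTrm σ))
    | .arr A B => .arr (substForm σ A) (substForm σ B)
    | .all1 a A => .all1 a (substForm (σ.skipTrm a) A)
    | .ex1 a A => .ex1 a (substForm (σ.skipTrm a) A)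
    | .all2 X A => .all2 X (substForm σ A)
    | .ex2 X A => .ex2 X (substForm σ A)
    | .rcd Fs => .rcd (substFFlds σ Fs)
    | .vnt Cs => .vnt (substFFlds σ Cs)
    | .mem t A => .mem (substTrm σ t) (substForm σ A)
    | .rest A t u => .rest (substForm σ A) (substTrm σ t) (substTrm σ u)
  def substFFlds (σ : Subst) : FFlds → FFlds
    | .nil => .nil
    | .cons l A Fs => .cons l (substForm σ A) (substFFlds σ Fs)
end

mutual
  /-- Substitution A[X := P] of a predicate variable by a (semantic) predicate. -/
  def substFormP (X : ℕ) (P : List Trm → Set Val) : Form → Form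
    | .pvar Y ts => if Y = X then .papp P ts else .pvar Y ts
    | .papp Q ts => .papp Q ts
    | .arr A B => .arr (substFormP X P A) (substFormP X P B)
    | .all1 a A => .all1 a (substFormP X P A)
    | .ex1 a A => .ex1 a (substFormP X P A)
    | .all2 Y A => if Y = X then .all2 Y A else .all2 Y (substFormP X P A)
    | .ex2 Y A => if Y = X then .ex2 Y A else .ex2 Y (substFormP X P A)
    | .rcd Fs => .rcd (substFFldsP X P Fs)
    | .vnt Cs => .vnt (substFFldsP X P Cs)
    | .mem t A => .mem t (substFormP X P A)
    | .rest A t u => .rest (substFormP X P A) t u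
  def substFFldsP (X : ℕ) (P : List Trm → Set Val) : FFlds → FFlds
    | .nil => .nil
    | .cons l A Fs => .cons l (substFormP X P A) (substFFldsP X P Fs)
end

/-- Free variables of a list of terms. -/
def fvTrmList (ts : List Trm) : Set (VKind × ℕ) := {p | ∃ t ∈ ts, p ∈ fvTrm t}

mutual
  /-- Free variables (of every kind, including predicate variables) of a formula. -/
  def fvForm : Form → Set (VKind × ℕ)
    | .pvar X ts => insert (VKind.prd, X) (fvTrmList ts)
    | .papp _ ts => fvTrmList ts
    | .arr A B => fvForm A ∪ fvForm B
    | .all1 a A => fvForm A \ {(VKind.trm, a)}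
    | .ex1 a A => fvForm A \ {(VKind.trm, a)}
    | .all2 X A => fvForm A \ {(VKind.prd, X)}
    | .ex2 X A => fvForm A \ {(VKind.prd, X)}
    | .rcd Fs => fvFFlds Fs
    | .vnt Cs => fvFFlds Cs
    | .mem t A => fvTrm t ∪ fvForm A
    | .rest A t u => fvForm A ∪ fvTrm t ∪ fvTrm u
  def fvFFlds : FFlds → Set (VKind × ℕ)
    | .nil => ∅
    | .cons _ A Fs => fvForm A ∪ fvFFlds Fs
end

/-- A set of values is ≡-closed if it is compatible with observational equivalence. -/
def EqClosed (S : Set Val) : Prop :=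
  ∀ v ∈ S, ∀ w : Val, Equiv (.val v) (.val w) → w ∈ S

/-- A substitution together with an interpretation of predicate variables. -/
structure FSubst : Type where
  sub : Subst
  prdS : ℕ → List Trm → Set Val

/-- Update of the term-variable component. -/
def FSubst.updTrm (σ : FSubst) (a : ℕ) (t : Trm) : FSubst :=
  { σ with sub := { σ.sub with trmS := Function.update σ.sub.trmS a t } }

/-- Update of the predicate-variable component. -/
def FSubst.updPrd (σ : FSubst) (X : ℕ) (P : List Trm → Set Val) : FSubst :=
  { σ with prdS := Function.update σ.prdS X P }

mutual
  /-- The raw semantics ⟦A⟧_σ of a formula: a set of values. -/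
  def sem (σ : FSubst) : Form → Set Val
    | .pvar X ts => σ.prdS X (ts.map (substTrm σ.sub))
    | .papp P ts => P (ts.map (substTrm σ.sub))
    | .arr A B =>
        {v | ∃ x t, v = .lam x t ∧
          ∀ w ∈ sem σ A, substTrm (subst1Lam x w) t ∈ biorth (sem σ B)}
    | .all1 a A => {v | ∀ t : Trm, ClosedTrm t → v ∈ sem (σ.updTrm a t) A}
    | .ex1 a A => {v | ∃ t : Trm, ClosedTrm t ∧ v ∈ sem (σ.updTrm a t) A}
    | .all2 X A =>
        {v | ∀ P : List Trm → Set Val, (∀ ts, EqClosed (P ts)) → v ∈ sem (σ.updPrd X P) A}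
    | .ex2 X A =>
        {v | ∃ P : List Trm → Set Val, (∀ ts, EqClosed (P ts)) ∧ v ∈ sem (σ.updPrd X P) A}
    | .rcd Fs => {v | ∃ fs : Flds, v = .rcd fs ∧ semFlds σ Fs fs}
    | .vnt Cs => semVnts σ Cs
    | .mem t A => {v | v ∈ sem σ A ∧ Equiv (substTrm σ.sub t) (.val v)}
    | .rest A t u => {v | Equiv (substTrm σ.sub t) (substTrm σ.sub u) ∧ v ∈ sem σ A}
  /-- Pointwise semantics of a record type. -/
  def semFlds (σ : FSubst) : FFlds → Flds → Prop
    | .nil, .nil => True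
    | .nil, .cons _ _ _ => False
    | .cons _ _ _, .nil => False
    | .cons l A Fs, .cons l' v fs => l = l' ∧ v ∈ sem σ A ∧ semFlds σ Fs fs
  /-- Semantics of a variant type (union over the constructors). -/
  def semVnts (σ : FSubst) : FFlds → Set Val
    | .nil => ∅
    | .cons c A Cs => {w | ∃ v, w = .cns c v ∧ v ∈ sem σ A} ∪ semVnts σ Cs
end

/-! ## Contexts and typing. -/

/-- Declarations of a context: `x : A`, `α : ¬A`, `a : Term`, `X : Pred`,
    `t ≡ u`, `t ≢ u`. -/
inductive Decl : Type where
  | lamD : ℕ → Form → Decl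
  | muD : ℕ → Form → Decl
  | trmD : ℕ → Decl
  | prdD : ℕ → Decl
  | eqD : Trm → Trm → Decl
  | neqD : Trm → Trm → Decl

/-- A context is a list of declarations (most recent first: `Γ, x : A` is
    `Decl.lamD x A :: Γ`). -/
abbrev Ctx : Type := List Decl

/-- The variables declared by a declaration. -/
def declDom : Decl → Set (VKind × ℕ)
  | .lamD x _ => {(VKind.lam, x)}
  | .muD α _ => {(VKind.mu, α)}
  | .trmD a => {(VKind.trm, a)}
  | .prdD X => {(VKind.prd, X)}
  | .eqD _ _ => ∅
  | .neqD _ _ => ∅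

/-- The domain of a context. -/
def domCtx (Γ : Ctx) : Set (VKind × ℕ) := {p | ∃ d ∈ Γ, p ∈ declDom d}

/-- The free variables of a declaration. -/
def declFV : Decl → Set (VKind × ℕ)
  | .lamD _ A => fvForm A
  | .muD _ A => fvForm A
  | .trmD _ => ∅
  | .prdD _ => ∅
  | .eqD t u => fvTrm t ∪ fvTrm u
  | .neqD t u => fvTrm t ∪ fvTrm u

/-- The free variables of a context. -/
def fvCtx (Γ : Ctx) : Set (VKind × ℕ) := {p | ∃ d ∈ Γ, p ∈ declFV d}

/-- Valid contexts (Figure 1 of the paper). -/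
inductive ValidCtx : Ctx → Prop where
  | nil : ValidCtx []
  | lamD {Γ x A} : ValidCtx Γ → (VKind.lam, x) ∉ domCtx Γ →
      fvForm A ⊆ insert (VKind.lam, x) (domCtx Γ) → ValidCtx (.lamD x A :: Γ)
  | muD {Γ α A} : ValidCtx Γ → (VKind.mu, α) ∉ domCtx Γ →
      fvForm A ⊆ domCtx Γ → ValidCtx (.muD α A :: Γ)
  | trmD {Γ a} : ValidCtx Γ → (VKind.trm, a) ∉ domCtx Γ → ValidCtx (.trmD a :: Γ)
  | prdD {Γ X} : ValidCtx Γ → (VKind.prd, X) ∉ domCtx Γ → ValidCtx (.prdD X :: Γ)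
  | eqD {Γ t u} : ValidCtx Γ → fvTrm t ∪ fvTrm u ⊆ domCtx Γ → ValidCtx (.eqD t u :: Γ)
  | neqD {Γ t u} : ValidCtx Γ → fvTrm t ∪ fvTrm u ⊆ domCtx Γ → ValidCtx (.neqD t u :: Γ)

mutual
  /-- The value typing judgement `Γ ⊩ v : A` (Figure 2 of the paper). -/
  inductive HasTypeV : Ctx → Val → Form → Prop where
    | ax (Γ : Ctx) (x : ℕ) (A : Form) :
        HasTypeV (.lamD x A :: Γ) (.var x) A
    | dn (Γ : Ctx) (v : Val) (A : Form) :
        HasTypeT Γ (.val v) A → HasTypeV Γ v A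
    | arrI (Γ : Ctx) (x : ℕ) (A : Form) (t : Trm) (B : Form) :
        HasTypeT (.lamD x A :: Γ) t B → HasTypeV Γ (.lam x t) (.arr A B)
    | memI (Γ : Ctx) (v : Val) (A : Form) :
        HasTypeV Γ v A → HasTypeV Γ v (.mem (.val v) A)
    | all1I (Γ : Ctx) (v : Val) (a : ℕ) (A : Form) :
        HasTypeV Γ v A → (VKind.trm, a) ∉ fvCtx Γ → HasTypeV Γ v (.all1 a A)
    | all2I (Γ : Ctx) (v : Val) (X : ℕ) (A : Form) :
        HasTypeV Γ v A → (VKind.prd, X) ∉ fvCtx Γ → HasTypeV Γ v (.all2 X A)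
    | rcdI (Γ : Ctx) (fs : Flds) (Fs : FFlds) :
        HasTypeFlds Γ fs Fs → HasTypeV Γ (.rcd fs) (.rcd Fs)
    | vntI (Γ : Ctx) (c : ℕ) (v : Val) (A : Form) (Cs : FFlds) :
        HasTypeV Γ v A → (c, A) ∈ Cs.toList → HasTypeV Γ (.cns c v) (.vnt Cs)

  /-- Pointwise typing of record fields. -/
  inductive HasTypeFlds : Ctx → Flds → FFlds → Prop where
    | nil (Γ : Ctx) : HasTypeFlds Γ .nil .nil
    | cons (Γ : Ctx) (l : ℕ) (v : Val) (A : Form) (fs : Flds) (Fs : FFlds) :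
        HasTypeV Γ v A → HasTypeFlds Γ fs Fs →
        HasTypeFlds Γ (.cons l v fs) (.cons l A Fs)

  /-- Typing of the branches of a case analysis on the value `v`. -/
  inductive HasTypeBrs : Ctx → Val → Brs → FFlds → Form → Prop where
    | nil (Γ : Ctx) (v : Val) (B : Form) : HasTypeBrs Γ v .nil .nil B
    | cons (Γ : Ctx) (v : Val) (c x : ℕ) (t : Trm) (bs : Brs) (A : Form) (Cs : FFlds) (B : Form) :
        HasTypeT (.eqD (.val (.cns c (.var x))) (.val v) :: .lamD x A :: Γ) t B →
        HasTypeBrs Γ v bs Cs B →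
        HasTypeBrs Γ v (.cons c x t bs) (.cons c A Cs) B

  /-- The term typing judgement `Γ ⊢ t : A` (Figure 2 of the paper). -/
  inductive HasTypeT : Ctx → Trm → Form → Prop where
    | up (Γ : Ctx) (v : Val) (A : Form) :
        HasTypeV Γ v A → HasTypeT Γ (.val v) A
    | arrE (Γ : Ctx) (t u : Trm) (A B : Form) :
        HasTypeT Γ t (.arr A B) → HasTypeT Γ u A → HasTypeT Γ (.app t u) B
    | muI (Γ : Ctx) (α : ℕ) (t : Trm) (A : Form) :
        HasTypeT (.muD α A :: Γ) t A → HasTypeT Γ (.mu α t) A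
    | name (Γ : Ctx) (α : ℕ) (t : Trm) (A B : Form) :
        HasTypeT (.muD α A :: Γ) t A →
        HasTypeT (.muD α A :: Γ) (.prc (.mk t (.svar α))) B
    | memE (Γ : Ctx) (x : ℕ) (u : Trm) (A : Form) (t : Trm) :
        HasTypeT (.eqD (.val (.var x)) u :: .lamD x A :: Γ) t A →
        HasTypeT (.lamD x (.mem u A) :: Γ) t A
    | restI (Γ : Ctx) (u₁ u₂ : Trm) (t : Trm) (A : Form) :
        HasTypeT (.eqD u₁ u₂ :: Γ) t A →
        HasTypeT (.eqD u₁ u₂ :: Γ) t (.rest A u₁ u₂)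
    | restE (Γ : Ctx) (x : ℕ) (A : Form) (u₁ u₂ : Trm) (t : Trm) (B : Form) :
        HasTypeT (.eqD u₁ u₂ :: .lamD x A :: Γ) t B →
        HasTypeT (.lamD x (.rest A u₁ u₂) :: Γ) t B
    | all1E (Γ : Ctx) (t : Trm) (a : ℕ) (A : Form) (u : Trm) :
        HasTypeT Γ t (.all1 a A) → HasTypeT Γ t (substForm (subst1Trm a u) A)
    | ex1I (Γ : Ctx) (t : Trm) (a : ℕ) (A : Form) (u : Trm) :
        HasTypeT Γ t (substForm (subst1Trm a u) A) → HasTypeT Γ t (.ex1 a A)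
    | ex1E (Γ : Ctx) (y : ℕ) (A : Form) (t : Trm) (B : Form) (a : ℕ) :
        HasTypeT (.lamD y A :: Γ) t B →
        (VKind.trm, a) ∉ fvCtx Γ ∪ fvForm B ∪ fvTrm t →
        HasTypeT (.lamD y (.ex1 a A) :: Γ) t B
    | all2E (Γ : Ctx) (t : Trm) (X : ℕ) (A : Form) (P : List Trm → Set Val) :
        HasTypeT Γ t (.all2 X A) → (∀ ts, EqClosed (P ts)) →
        HasTypeT Γ t (substFormP X P A)
    | ex2I (Γ : Ctx) (t : Trm) (X : ℕ) (A : Form) (P : List Trm → Set Val) :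
        (∀ ts, EqClosed (P ts)) → HasTypeT Γ t (substFormP X P A) →
        HasTypeT Γ t (.ex2 X A)
    | ex2E (Γ : Ctx) (x : ℕ) (A : Form) (t : Trm) (B : Form) (X : ℕ) :
        HasTypeT (.lamD x A :: Γ) t B →
        (VKind.prd, X) ∉ fvCtx Γ ∪ fvForm B →
        HasTypeT (.lamD x (.ex2 X A) :: Γ) t B
    | rcdE (Γ : Ctx) (v : Val) (Fs : FFlds) (l : ℕ) (A : Form) :
        HasTypeV Γ v (.rcd Fs) → Fs.lookup l = some A →
        HasTypeT Γ (.prj v l) A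
    | vntE (Γ : Ctx) (v : Val) (Cs : FFlds) (bs : Brs) (B : Form) :
        HasTypeV Γ v (.vnt Cs) → HasTypeBrs Γ v bs Cs B →
        HasTypeT Γ (.cse v bs) B
    | eqVL (Γ : Ctx) (w₁ w₂ : Val) (x : ℕ) (t : Trm) (A : Form) :
        HasTypeT (.eqD (.val w₁) (.val w₂) :: Γ) (substTrm (subst1Lam x w₁) t) A →
        HasTypeT (.eqD (.val w₁) (.val w₂) :: Γ) (substTrm (subst1Lam x w₂) t) A
    | eqTL (Γ : Ctx) (t₁ t₂ : Trm) (a : ℕ) (t : Trm) (A : Form) :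
        HasTypeT (.eqD t₁ t₂ :: Γ) (substTrm (subst1Trm a t₁) t) A →
        HasTypeT (.eqD t₁ t₂ :: Γ) (substTrm (subst1Trm a t₂) t) A
    | eqVR (Γ : Ctx) (w₁ w₂ : Val) (x : ℕ) (t : Trm) (A : Form) :
        HasTypeT (.eqD (.val w₁) (.val w₂) :: Γ) t (substForm (subst1Lam x w₁) A) →
        HasTypeT (.eqD (.val w₁) (.val w₂) :: Γ) t (substForm (subst1Lam x w₂) A)
    | eqTR (Γ : Ctx) (t₁ t₂ : Trm) (a : ℕ) (t : Trm) (A : Form) :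
        HasTypeT (.eqD t₁ t₂ :: Γ) t (substForm (subst1Trm a t₁) A) →
        HasTypeT (.eqD t₁ t₂ :: Γ) t (substForm (subst1Trm a t₂) A)
end

/-- A substitution σ realizes a context Γ. -/
def Realizes (σ : FSubst) (Γ : Ctx) : Prop :=
  (∀ x A, Decl.lamD x A ∈ Γ → σ.sub.lamS x ∈ sem σ A) ∧
  (∀ α A, Decl.muD α A ∈ Γ → σ.sub.muS α ∈ orth (sem σ A)) ∧
  (∀ X, Decl.prdD X ∈ Γ → ∀ ts, EqClosed (σ.prdS X ts)) ∧
  (∀ t u, Decl.eqD t u ∈ Γ → Equiv (substTrm σ.sub t) (substTrm σ.sub u)) ∧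
  (∀ t u, Decl.neqD t u ∈ Γ → ¬ Equiv (substTrm σ.sub t) (substTrm σ.sub u))

/-- A formula is pure if it contains no occurrence of the arrow ⇒. -/
inductive PureForm : Form → Prop where
  | pvar (X : ℕ) (ts : List Trm) : PureForm (.pvar X ts)
  | papp (P : List Trm → Set Val) (ts : List Trm) : PureForm (.papp P ts)
  | all1 {a A} : PureForm A → PureForm (.all1 a A)
  | ex1 {a A} : PureForm A → PureForm (.ex1 a A)
  | all2 {X A} : PureForm A → PureForm (.all2 X A)
  | ex2 {X A} : PureForm A → PureForm (.ex2 X A)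
  | rcd {Fs} : (∀ p ∈ FFlds.toList Fs, PureForm p.2) → PureForm (.rcd Fs)
  | vnt {Cs} : (∀ p ∈ FFlds.toList Cs, PureForm p.2) → PureForm (.vnt Cs)
  | mem {t A} : PureForm A → PureForm (.mem t A)
  | rest {A t u} : PureForm A → PureForm (.rest A t u)

end CBV

namespace CBV

/-!
A classical two-valued model suffices. Erase every term, read a predicate variable as a
proposition, `∀X`/`∃X` as quantifiers over `Prop`, a declaration `x : A` as the assertion of `A`
and `α : ¬A` as its negation. Equations, memberships and restrictions then carry no information,
every typing rule is sound (the `μ`-rule is proof by contradiction), and `∀X₀ X₀` is false.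
-/

open Function

mutual
  def holds (ρ : ℕ → Prop) : Form → Prop
    | .pvar X _ => ρ X
    -- any fixed value works, as `substFormP X P` trades `X` for `papp P`
    | .papp _ _ => True
    | .arr A B => holds ρ A → holds ρ B
    | .all1 _ A => holds ρ A
    | .ex1 _ A => holds ρ A
    | .all2 X A => ∀ p : Prop, holds (update ρ X p) A
    | .ex2 X A => ∃ p : Prop, holds (update ρ X p) A
    | .rcd Fs => holdsAll ρ Fs
    | .vnt Cs => holdsAny ρ Cs
    | .mem _ A => holds ρ A
    | .rest A _ _ => holds ρ A
  def holdsAll (ρ : ℕ → Prop) : FFlds → Prop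
    | .nil => True
    | .cons _ A Fs => holds ρ A ∧ holdsAll ρ Fs
  def holdsAny (ρ : ℕ → Prop) : FFlds → Prop
    | .nil => False
    | .cons _ A Cs => holds ρ A ∨ holdsAny ρ Cs
end

mutual
  theorem holds_substForm (σ : Subst) : ∀ (ρ : ℕ → Prop) (A : Form),
      holds ρ (substForm σ A) ↔ holds ρ A
    | _, .pvar .. | _, .papp .. => Iff.rfl
    | ρ, .arr A B => imp_congr (holds_substForm σ ρ A) (holds_substForm σ ρ B)
    | ρ, .all1 _ A | ρ, .ex1 _ A => holds_substForm _ ρ A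
    | _, .all2 _ A => forall_congr' fun _ => holds_substForm σ _ A
    | _, .ex2 _ A => exists_congr fun _ => holds_substForm σ _ A
    | ρ, .rcd Fs => holdsAll_substFFlds σ ρ Fs
    | ρ, .vnt Cs => holdsAny_substFFlds σ ρ Cs
    | ρ, .mem _ A | ρ, .rest A _ _ => holds_substForm σ ρ A
  theorem holdsAll_substFFlds (σ : Subst) : ∀ (ρ : ℕ → Prop) (Fs : FFlds),
      holdsAll ρ (substFFlds σ Fs) ↔ holdsAll ρ Fs
    | _, .nil => Iff.rfl
    | ρ, .cons _ A Fs => and_congr (holds_substForm σ ρ A) (holdsAll_substFFlds σ ρ Fs)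
  theorem holdsAny_substFFlds (σ : Subst) : ∀ (ρ : ℕ → Prop) (Cs : FFlds),
      holdsAny ρ (substFFlds σ Cs) ↔ holdsAny ρ Cs
    | _, .nil => Iff.rfl
    | ρ, .cons _ A Cs => or_congr (holds_substForm σ ρ A) (holdsAny_substFFlds σ ρ Cs)
end

mutual
  theorem holds_substFormP (X : ℕ) (P : List Trm → Set Val) : ∀ (ρ : ℕ → Prop) (A : Form),
      holds ρ (substFormP X P A) ↔ holds (update ρ X True) A
    | ρ, .pvar Y _ => by
        rcases eq_or_ne Y X with rfl | hYX
        · simp [substFormP, holds]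
        · simp [substFormP, holds, hYX]
    | _, .papp .. => Iff.rfl
    | ρ, .arr A B => imp_congr (holds_substFormP X P ρ A) (holds_substFormP X P ρ B)
    | ρ, .all1 _ A | ρ, .ex1 _ A => holds_substFormP X P ρ A
    | ρ, .all2 Y A => by
        rcases eq_or_ne Y X with rfl | hYX
        · simp only [substFormP, if_pos, holds, update_idem]
        · simp only [substFormP, if_neg hYX, holds]
          exact forall_congr' fun _ => by rw [holds_substFormP X P, update_comm hYX]
    | ρ, .ex2 Y A => by
        rcases eq_or_ne Y X with rfl | hYX
        · simp only [substFormP, if_pos, holds, update_idem]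
        · simp only [substFormP, if_neg hYX, holds]
          exact exists_congr fun _ => by rw [holds_substFormP X P, update_comm hYX]
    | ρ, .rcd Fs => holdsAll_substFFldsP X P ρ Fs
    | ρ, .vnt Cs => holdsAny_substFFldsP X P ρ Cs
    | ρ, .mem _ A | ρ, .rest A _ _ => holds_substFormP X P ρ A
  theorem holdsAll_substFFldsP (X : ℕ) (P : List Trm → Set Val) : ∀ (ρ : ℕ → Prop) (Fs : FFlds),
      holdsAll ρ (substFFldsP X P Fs) ↔ holdsAll (update ρ X True) Fs
    | _, .nil => Iff.rfl
    | ρ, .cons _ A Fs => and_congr (holds_substFormP X P ρ A) (holdsAll_substFFldsP X P ρ Fs)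
  theorem holdsAny_substFFldsP (X : ℕ) (P : List Trm → Set Val) : ∀ (ρ : ℕ → Prop) (Cs : FFlds),
      holdsAny ρ (substFFldsP X P Cs) ↔ holdsAny (update ρ X True) Cs
    | _, .nil => Iff.rfl
    | ρ, .cons _ A Cs => or_congr (holds_substFormP X P ρ A) (holdsAny_substFFldsP X P ρ Cs)
end

mutual
  theorem holds_congr : ∀ {ρ ρ' : ℕ → Prop} (A : Form),
      (∀ X, (VKind.prd, X) ∈ fvForm A → (ρ X ↔ ρ' X)) → (holds ρ A ↔ holds ρ' A)
    | _, _, .pvar X _, h => h X (Set.mem_insert _ _)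
    | _, _, .papp .., _ => Iff.rfl
    | _, _, .arr A B, h =>
        imp_congr (holds_congr A fun X hX => h X (Or.inl hX))
          (holds_congr B fun X hX => h X (Or.inr hX))
    | _, _, .all1 _ A, h | _, _, .ex1 _ A, h => holds_congr A fun X hX => h X ⟨hX, by simp⟩
    | _, _, .all2 Y A, h => forall_congr' fun _ => holds_congr A fun X hX => by
        rcases eq_or_ne X Y with rfl | hXY
        · simp
        · simpa [update_of_ne hXY] using h X ⟨hX, by simpa using hXY⟩
    | _, _, .ex2 Y A, h => exists_congr fun _ => holds_congr A fun X hX => by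
        rcases eq_or_ne X Y with rfl | hXY
        · simp
        · simpa [update_of_ne hXY] using h X ⟨hX, by simpa using hXY⟩
    | _, _, .rcd Fs, h => holdsAll_congr Fs h
    | _, _, .vnt Cs, h => holdsAny_congr Cs h
    | _, _, .mem _ A, h => holds_congr A fun X hX => h X (Or.inr hX)
    | _, _, .rest A _ _, h => holds_congr A fun X hX => h X (Or.inl (Or.inl hX))
  theorem holdsAll_congr : ∀ {ρ ρ' : ℕ → Prop} (Fs : FFlds),
      (∀ X, (VKind.prd, X) ∈ fvFFlds Fs → (ρ X ↔ ρ' X)) → (holdsAll ρ Fs ↔ holdsAll ρ' Fs)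
    | _, _, .nil, _ => Iff.rfl
    | _, _, .cons _ A Fs, h =>
        and_congr (holds_congr A fun X hX => h X (Or.inl hX))
          (holdsAll_congr Fs fun X hX => h X (Or.inr hX))
  theorem holdsAny_congr : ∀ {ρ ρ' : ℕ → Prop} (Cs : FFlds),
      (∀ X, (VKind.prd, X) ∈ fvFFlds Cs → (ρ X ↔ ρ' X)) → (holdsAny ρ Cs ↔ holdsAny ρ' Cs)
    | _, _, .nil, _ => Iff.rfl
    | _, _, .cons _ A Cs, h =>
        or_congr (holds_congr A fun X hX => h X (Or.inl hX))
          (holdsAny_congr Cs fun X hX => h X (Or.inr hX))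
end

theorem holds_update_of_not_mem {X : ℕ} {A : Form} (h : (VKind.prd, X) ∉ fvForm A)
    (ρ : ℕ → Prop) (p : Prop) : holds (update ρ X p) A ↔ holds ρ A :=
  holds_congr A fun _ hY => by rw [update_of_ne (by rintro rfl; exact h hY)]

theorem holds_of_lookup {ρ : ℕ → Prop} :
    ∀ {Fs : FFlds} {l : ℕ} {A : Form}, Fs.lookup l = some A → holdsAll ρ Fs → holds ρ A
  | .nil, _, _, h, _ => nomatch h
  | .cons l' _ _, l, _, h, ⟨hA, hFs⟩ => by
      unfold FFlds.lookup at h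
      split_ifs at h
      · exact Option.some_injective _ h ▸ hA
      · exact holds_of_lookup h hFs

theorem holdsAny_of_mem {ρ : ℕ → Prop} :
    ∀ {Cs : FFlds} {c : ℕ} {A : Form}, (c, A) ∈ Cs.toList → holds ρ A → holdsAny ρ Cs
  | .cons .., _, _, .head _, hA => .inl hA
  | .cons .., _, _, .tail _ h, hA => .inr (holdsAny_of_mem h hA)

def declHolds (ρ : ℕ → Prop) : Decl → Prop
  | .lamD _ A => holds ρ A
  | .muD _ A => ¬ holds ρ A
  | _ => True

def ctxHolds (ρ : ℕ → Prop) (Γ : Ctx) : Prop := ∀ d ∈ Γ, declHolds ρ d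

theorem ctxHolds_cons {ρ : ℕ → Prop} {d : Decl} {Γ : Ctx} :
    ctxHolds ρ (d :: Γ) ↔ declHolds ρ d ∧ ctxHolds ρ Γ :=
  List.forall_mem_cons

theorem ctxHolds_update_of_not_mem {X : ℕ} {Γ : Ctx} (h : (VKind.prd, X) ∉ fvCtx Γ)
    (ρ : ℕ → Prop) (p : Prop) : ctxHolds (update ρ X p) Γ ↔ ctxHolds ρ Γ := by
  refine forall₂_congr fun d hd => ?_
  have hd : (VKind.prd, X) ∉ declFV d := fun hX => h ⟨d, hd, hX⟩
  cases d with
  | lamD _ A => exact holds_update_of_not_mem hd ρ p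
  | muD _ A => exact not_congr (holds_update_of_not_mem hd ρ p)
  | _ => exact Iff.rfl

mutual
  theorem HasTypeV.holds {Γ : Ctx} {v : Val} {A : Form} :
      HasTypeV Γ v A → ∀ ρ, ctxHolds ρ Γ → CBV.holds ρ A
    | .ax .., _, hρ => hρ _ List.mem_cons_self
    | .dn _ _ _ h, ρ, hρ | .memI _ _ _ h, ρ, hρ | .all1I _ _ _ _ h _, ρ, hρ => h.holds ρ hρ
    | .arrI _ _ _ _ _ h, ρ, hρ => fun hA => h.holds ρ (ctxHolds_cons.2 ⟨hA, hρ⟩)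
    | .all2I _ _ _ _ h hX, ρ, hρ => fun p => h.holds _ ((ctxHolds_update_of_not_mem hX ρ p).2 hρ)
    | .rcdI _ _ _ h, ρ, hρ => h.holdsAll ρ hρ
    | .vntI _ _ _ _ _ h hmem, ρ, hρ => holdsAny_of_mem hmem (h.holds ρ hρ)
  theorem HasTypeFlds.holdsAll {Γ : Ctx} {fs : Flds} {Fs : FFlds} :
      HasTypeFlds Γ fs Fs → ∀ ρ, ctxHolds ρ Γ → CBV.holdsAll ρ Fs
    | .nil _, _, _ => trivial
    | .cons _ _ _ _ _ _ h hs, ρ, hρ => ⟨h.holds ρ hρ, hs.holdsAll ρ hρ⟩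
  theorem HasTypeBrs.holds {Γ : Ctx} {v : Val} {bs : Brs} {Cs : FFlds} {B : Form} :
      HasTypeBrs Γ v bs Cs B → ∀ ρ, ctxHolds ρ Γ → holdsAny ρ Cs → CBV.holds ρ B
    | .nil .., _, _, hCs => hCs.elim
    | .cons _ _ _ _ _ _ _ _ _ h _, ρ, hρ, .inl hA =>
        h.holds ρ (ctxHolds_cons.2 ⟨trivial, ctxHolds_cons.2 ⟨hA, hρ⟩⟩)
    | .cons _ _ _ _ _ _ _ _ _ _ hs, ρ, hρ, .inr hCs => hs.holds ρ hρ hCs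
  theorem HasTypeT.holds {Γ : Ctx} {t : Trm} {A : Form} :
      HasTypeT Γ t A → ∀ ρ, ctxHolds ρ Γ → CBV.holds ρ A
    | .up _ _ _ h, ρ, hρ | .restI _ _ _ _ _ h, ρ, hρ | .eqVL _ _ _ _ _ _ h, ρ, hρ
    | .eqTL _ _ _ _ _ _ h, ρ, hρ => h.holds ρ hρ
    | .arrE _ _ _ _ _ h hu, ρ, hρ => h.holds ρ hρ (hu.holds ρ hρ)
    | .muI _ _ _ _ h, ρ, hρ => by_contra fun hA => hA (h.holds ρ (ctxHolds_cons.2 ⟨hA, hρ⟩))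
    | .name _ _ _ _ _ h, ρ, hρ => absurd (h.holds ρ hρ) (ctxHolds_cons.1 hρ).1
    | .memE _ _ _ _ _ h, ρ, hρ | .restE _ _ _ _ _ _ _ h, ρ, hρ => by
        obtain ⟨hA, hΓ⟩ := ctxHolds_cons.1 hρ
        exact h.holds ρ (ctxHolds_cons.2 ⟨trivial, ctxHolds_cons.2 ⟨hA, hΓ⟩⟩)
    | .all1E _ _ _ A _ h, ρ, hρ => (holds_substForm _ ρ A).2 (h.holds ρ hρ)
    | .ex1I _ _ _ A _ h, ρ, hρ => (holds_substForm _ ρ A).1 (h.holds ρ hρ)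
    | .ex1E _ _ _ _ _ _ h _, ρ, hρ => by
        obtain ⟨hA, hΓ⟩ := ctxHolds_cons.1 hρ
        exact h.holds ρ (ctxHolds_cons.2 ⟨hA, hΓ⟩)
    | .all2E _ _ X A P h _, ρ, hρ => (holds_substFormP X P ρ A).2 (h.holds ρ hρ True)
    | .ex2I _ _ X A P _ h, ρ, hρ => ⟨True, (holds_substFormP X P ρ A).1 (h.holds ρ hρ)⟩
    | .ex2E _ _ _ _ _ _ h hX, ρ, hρ => by
        obtain ⟨⟨p, hA⟩, hΓ⟩ := ctxHolds_cons.1 hρ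
        have hΓ' := (ctxHolds_update_of_not_mem (fun h => hX (.inl h)) ρ p).2 hΓ
        exact (holds_update_of_not_mem (fun h => hX (.inr h)) ρ p).1
          (h.holds _ (ctxHolds_cons.2 ⟨hA, hΓ'⟩))
    | .rcdE _ _ _ _ _ h hl, ρ, hρ => holds_of_lookup hl (h.holds ρ hρ)
    | .vntE _ _ _ _ _ h hb, ρ, hρ => hb.holds ρ hρ (h.holds ρ hρ)
    | .eqVR _ _ _ _ _ A h, ρ, hρ | .eqTR _ _ _ _ _ A h, ρ, hρ =>
        (holds_substForm _ ρ A).2 ((holds_substForm _ ρ A).1 (h.holds ρ hρ))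
end

/-- Theorem 8 (logical consistency): no term has type ⊥ = ∀X₀ X₀ in the
    empty context. -/
theorem consistency :
    ¬ ∃ t : Trm, HasTypeT ([] : Ctx) t (Form.all2 0 (.pvar 0 [])) := by
  rintro ⟨t, ht⟩
  have hfalse : holds (update (fun _ => True) 0 False) (.pvar 0 []) :=
    ht.holds (fun _ => True) (fun _ h => nomatch h) False
  simp [holds] at hfalse

end CBV
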